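/- Under hypotheses (H), assume additionally that j' is continuous at ĉ := lim_{s→∞} f(s) > 0, and set A₁(s) = j'(f(s))·[ (3−p)·f'(s)² + n·j(f(s))²/g(s)² ]. Then lim_{s→∞} A₁(s)·s^{2δ} = n·j'(ĉ)·j(ĉ)²/C₁². -/

import Mathlib

/-!
Written as `(E^{(p-2)/2} gⁿ f')' = n E^{(p-2)/2} gⁿ⁻² j(f) j'(f)`, the equation controls the
growth of the flux `Q = E^{(p-2)/2} gⁿ f'`. Since `f'^{p-1} gⁿ ≤ Q`, `E ≤ f'² + n j(ĉ)²/g²` and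
`g ≍ s^δ`, the right-hand side is at most `K (Q + 1)^α s^{e-1}` with `α = (p-2)/(p-1)`, so
integrating `((Q + 1)^{1-α})'` gives `(Q + 1)^{1/(p-1)} ≤ D s^e` and hence
`f' ≤ D' s^{e - nδ/(p-1)}`. Because `δ (p - n) > 1` and `p < n + 1`, the exponent `e` can be
chosen with `e - nδ/(p-1) < -δ`, so `f'² s^{2δ} → 0`; the other part of `A₁ s^{2δ}` tends to
`n j'(ĉ) j(ĉ)²/C₁²` because `g ~ C₁ s^δ`.
-/

open Real Filter Topology

/-- Squared energy density `|dF|²(s) = f'(s)² + n · j(f(s))² / g(s)²` of the rotationally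
symmetric map `F(s,θ) = (f(s),θ)` between `M_g` and `N_j`. -/
noncomputable def energyDensitySq (n : ℕ) (g j f : ℝ → ℝ) (s : ℝ) : ℝ :=
  (deriv f s) ^ 2 + (n : ℝ) * (j (f s)) ^ 2 / (g s) ^ 2

/-- `f` solves the rotationally symmetric `p`-harmonic equation `τ_p(F) = 0`. -/
def SolvesPHarmonic (n : ℕ) (p : ℝ) (g j f : ℝ → ℝ) : Prop :=
  ∀ s : ℝ, 0 < s → 0 < energyDensitySq n g j f s →
    deriv (deriv f) s
      + ((n : ℝ) / (g s) ^ 2) * (g s * deriv g s * deriv f s - j (f s) * deriv j (f s))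
      + (p - 2) * (energyDensitySq n g j f s)⁻¹ * deriv f s *
          (deriv f s * deriv (deriv f) s
            + (n : ℝ) * (j (f s) / (g s) ^ 3) *
                (deriv j (f s) * deriv f s * g s - j (f s) * deriv g s)) = 0

open Set

theorem Real.add_rpow_le_two_rpow_mul_add_rpow {x y r : ℝ} (hx : 0 ≤ x) (hy : 0 ≤ y)
    (hr : 0 ≤ r) : (x + y) ^ r ≤ 2 ^ r * (x ^ r + y ^ r) := calc
  (x + y) ^ r ≤ (2 * max x y) ^ r := by
    gcongr
    rw [two_mul]; exact add_le_add (le_max_left x y) (le_max_right x y)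
  _ = 2 ^ r * max x y ^ r := mul_rpow zero_le_two (le_max_of_le_left hx)
  _ ≤ 2 ^ r * (x ^ r + y ^ r) := by
    gcongr
    rcases max_cases x y with ⟨h, -⟩ | ⟨h, -⟩ <;> rw [h]
    · linarith [rpow_nonneg hy r]
    · linarith [rpow_nonneg hx r]

theorem MonotoneOn.le_of_tendsto_atTop {f : ℝ → ℝ} {a c s : ℝ} (hf : MonotoneOn f (Ioi a))
    (hc : Tendsto f atTop (𝓝 c)) (hs : a < s) : f s ≤ c :=
  ge_of_tendsto hc ((eventually_ge_atTop s).mono fun _ ht => hf hs (hs.trans_le ht) ht)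

theorem le_mul_rpow_of_hasDerivAt_le {φ φ' : ℝ → ℝ} {s₀ K e : ℝ} (hs₀ : 1 ≤ s₀)
    (hK : 0 ≤ K) (he : 0 < e) (hφ : ∀ s ≥ s₀, HasDerivAt φ (φ' s) s)
    (hφ' : ∀ s ≥ s₀, φ' s ≤ K * s ^ (e - 1)) :
    ∀ s ≥ s₀, φ s ≤ (|φ s₀| + K / e) * s ^ e := by
  have hpow : ∀ s ≥ s₀, HasDerivAt (fun x => K / e * x ^ e) (K * s ^ (e - 1)) s :=
    fun s hs => by
      refine ((hasDerivAt_rpow_const (Or.inl (by linarith : s ≠ 0))).const_mul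
        (K / e)).congr_deriv ?_
      field_simp
  have hanti : AntitoneOn (fun s => φ s - K / e * s ^ e) (Ici s₀) := by
    refine antitoneOn_of_hasDerivWithinAt_nonpos (convex_Ici s₀)
      (fun s hs => ((hφ s hs).sub (hpow s hs)).continuousAt.continuousWithinAt)
      (fun s hs => ((hφ s ?_).sub (hpow s ?_)).hasDerivWithinAt) (fun s hs => ?_)
    all_goals rw [interior_Ici] at hs
    exacts [hs.le, hs.le, sub_nonpos.2 (hφ' s hs.le)]
  intro s hs
  have h1 : 1 ≤ s ^ e := one_le_rpow (hs₀.trans hs) he.le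
  have h2 := hanti self_mem_Ici hs hs
  have h3 : 0 ≤ K / e * s₀ ^ e := by positivity
  simp only at h2
  nlinarith [le_abs_self (φ s₀), abs_nonneg (φ s₀)]

theorem exists_rpow_one_sub_le_mul_rpow_of_hasDerivAt_le {u u' : ℝ → ℝ} {s₀ K α e : ℝ}
    (hs₀ : 1 ≤ s₀) (hK : 0 ≤ K) (hα : α < 1) (he : 0 < e) (hu : ∀ s ≥ s₀, 0 < u s)
    (hu' : ∀ s ≥ s₀, HasDerivAt u (u' s) s)
    (hbound : ∀ s ≥ s₀, u' s ≤ K * u s ^ α * s ^ (e - 1)) :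
    ∃ D, ∀ s ≥ s₀, u s ^ (1 - α) ≤ D * s ^ e := by
  refine ⟨_, le_mul_rpow_of_hasDerivAt_le hs₀ (mul_nonneg (sub_nonneg.2 hα.le) hK) he
    (fun s hs => (hu' s hs).rpow_const (Or.inl (hu s hs).ne')) fun s hs => ?_⟩
  have hus := hu s hs
  calc u' s * (1 - α) * u s ^ (1 - α - 1)
      ≤ K * u s ^ α * s ^ (e - 1) * (1 - α) * u s ^ (-α) := by
        rw [sub_sub_cancel_left]
        exact mul_le_mul_of_nonneg_right
          (mul_le_mul_of_nonneg_right (hbound s hs) (by linarith)) (rpow_nonneg hus.le _)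
    _ = (1 - α) * K * s ^ (e - 1) := by
        rw [rpow_neg hus.le]; field_simp

theorem eventually_rpow_le_of_tendsto_div {g : ℝ → ℝ} {C δ : ℝ} (hC : 0 < C)
    (hg : ∀ᶠ s in atTop, 0 < g s) (h : Tendsto (fun s => g s / (C * s ^ δ)) atTop (𝓝 1))
    {e b : ℝ} (heb : δ * e ≤ b) : ∀ᶠ s in atTop, g s ^ e ≤ 2 * C ^ e * s ^ b := by
  have hlim : Tendsto (fun s => (g s / (C * s ^ δ)) ^ e) atTop (𝓝 1) := by
    simpa using h.rpow_const (Or.inl one_ne_zero)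
  filter_upwards [hlim.eventually (gt_mem_nhds one_lt_two), hg, eventually_ge_atTop 1]
    with s hlt hgs hs
  have hs0 : 0 < s := one_pos.trans_le hs
  rw [div_rpow hgs.le (by positivity), mul_rpow hC.le (by positivity), ← rpow_mul hs0.le,
    div_lt_iff₀ (by positivity)] at hlt
  calc g s ^ e ≤ 2 * (C ^ e * s ^ (δ * e)) := hlt.le
    _ ≤ 2 * C ^ e * s ^ b := by rw [← mul_assoc]; gcongr

theorem tendsto_div_sq_mul_rpow_of_tendsto_div {g u : ℝ → ℝ} {C δ L : ℝ} (hC : C ≠ 0)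
    (hu : Tendsto u atTop (𝓝 L)) (hg : Tendsto (fun s => g s / (C * s ^ δ)) atTop (𝓝 1)) :
    Tendsto (fun s => u s / g s ^ 2 * s ^ (2 * δ)) atTop (𝓝 (L / C ^ 2)) := by
  have h := hu.div ((hg.pow 2).mul_const (C ^ 2)) (by simpa using hC)
  rw [one_pow, one_mul] at h
  refine h.congr' ?_
  filter_upwards [eventually_gt_atTop 0] with s hs
  have hsδ : s ^ δ ≠ 0 := (rpow_pos_of_pos hs δ).ne'
  simp only [Pi.div_apply]
  rw [show s ^ (2 * δ) = (s ^ δ) ^ 2 by rw [← rpow_natCast, ← rpow_mul hs.le]; ring_nf]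
  field_simp

theorem exists_flux_growth_exponent {n p δ : ℝ} (hp₁ : 1 < p) (hpn : n < p) (hp₂ : p < n + 1)
    (hδ : (p - n)⁻¹ < δ) :
    ∃ e, 0 < e ∧ δ * ((n - 2 * (p - 1)) / (p - 1)) ≤ e - 1 ∧ δ * (n - p) ≤ e - 1 ∧
      e - δ * (n / (p - 1)) + δ < 0 := by
  have hδ₁ : 1 < δ * (p - n) := by rwa [inv_lt_iff_one_lt_mul₀ (by linarith)] at hδ
  have hp1 : p - 1 ≠ 0 := by linarith
  set A := δ * ((n - 2 * (p - 1)) / (p - 1)) with hA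
  set U := δ * (n / (p - 1)) - δ with hU
  have hU₀ : 0 < U := by
    rw [hU, show δ * (n / (p - 1)) - δ = δ * (n + 1 - p) / (p - 1) by field_simp; ring]
    exact div_pos (by nlinarith) (by linarith)
  have hAU : U - (A + 1) = δ - 1 := by rw [hU, hA]; field_simp; ring
  have hmax : max (A + 1) (U / 2) < U := max_lt (by nlinarith) (half_lt_self hU₀)
  refine ⟨max (A + 1) (U / 2), by positivity, by linarith [le_max_left (A + 1) (U / 2)],
    by nlinarith [le_max_right (A + 1) (U / 2)], by linarith⟩

theorem rpow_sub_two_eq_sq_rpow {x : ℝ} (hx : 0 ≤ x) (p : ℝ) :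
    x ^ (p - 2) = (x ^ 2) ^ ((p - 2) / 2) := by
  rw [← rpow_natCast_mul hx]; push_cast; ring_nf

section Flux

variable {n : ℕ} {p : ℝ} {g j f : ℝ → ℝ} {s : ℝ}

noncomputable def pFlux (n : ℕ) (p : ℝ) (g j f : ℝ → ℝ) (s : ℝ) : ℝ :=
  energyDensitySq n g j f s ^ ((p - 2) / 2) * g s ^ n * deriv f s

noncomputable def pFluxSource (n : ℕ) (p : ℝ) (g j f : ℝ → ℝ) (s : ℝ) : ℝ :=
  n * energyDensitySq n g j f s ^ ((p - 2) / 2) * g s ^ n * j (f s) * deriv j (f s) / g s ^ 2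

theorem sq_deriv_le_energyDensitySq : deriv f s ^ 2 ≤ energyDensitySq n g j f s :=
  le_add_of_nonneg_right (by positivity)

theorem energyDensitySq_pos (hf' : 0 < deriv f s) : 0 < energyDensitySq n g j f s :=
  (pow_pos hf' 2).trans_le sq_deriv_le_energyDensitySq

theorem energyDensitySq_le {J : ℝ} (hj : 0 ≤ j (f s)) (hJ : j (f s) ≤ J) :
    energyDensitySq n g j f s ≤ deriv f s ^ 2 + n * J ^ 2 / g s ^ 2 := by
  unfold energyDensitySq; gcongr

theorem hasDerivAt_energyDensitySq (hf : DifferentiableAt ℝ f s)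
    (hf' : DifferentiableAt ℝ (deriv f) s) (hg : DifferentiableAt ℝ g s)
    (hj : DifferentiableAt ℝ j (f s)) (hgs : g s ≠ 0) :
    HasDerivAt (energyDensitySq n g j f) (2 * (deriv f s * deriv (deriv f) s
      + n * (j (f s) / g s ^ 3) * (deriv j (f s) * deriv f s * g s - j (f s) * deriv g s))) s := by
  have hjf := hj.hasDerivAt.comp s hf.hasDerivAt
  refine ((hf'.hasDerivAt.pow 2).add (((hjf.pow 2).const_mul (n : ℝ)).div
    (hg.hasDerivAt.pow 2) (pow_ne_zero 2 hgs))).congr_deriv ?_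
  simp only [Pi.pow_apply, Function.comp_apply]
  field_simp
  ring

theorem SolvesPHarmonic.hasDerivAt_pFlux (hsol : SolvesPHarmonic n p g j f) (hs : 0 < s)
    (hf : DifferentiableAt ℝ f s) (hf' : DifferentiableAt ℝ (deriv f) s)
    (hg : DifferentiableAt ℝ g s) (hj : DifferentiableAt ℝ j (f s))
    (hfs : 0 < deriv f s) (hgs : g s ≠ 0) :
    HasDerivAt (pFlux n p g j f) (pFluxSource n p g j f s) s := by
  have hE := energyDensitySq_pos (n := n) (g := g) (j := j) hfs
  refine ((((hasDerivAt_energyDensitySq hf hf' hg hj hgs).rpow_const (p := (p - 2) / 2)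
    (Or.inl hE.ne')).mul (hg.hasDerivAt.pow n)).mul hf'.hasDerivAt).congr_deriv ?_
  have hODE := hsol s hs hE
  have hpow : ((n : ℕ) : ℝ) * g s ^ (n - 1) = n * g s ^ n / g s := by
    rcases n with _ | n
    · simp
    · rw [Nat.add_sub_cancel, pow_succ]; field_simp
  rw [pFluxSource, rpow_sub_one hE.ne', mul_assoc (n : ℝ), hpow]
  simp only [Pi.mul_apply, Pi.pow_apply]
  field_simp at hODE ⊢
  linear_combination hODE

theorem pFlux_pos (hfs : 0 < deriv f s) (hgs : 0 < g s) : 0 < pFlux n p g j f s := by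
  have := energyDensitySq_pos (n := n) (g := g) (j := j) hfs
  unfold pFlux; positivity

theorem deriv_rpow_sub_one_mul_pow_le_pFlux (hp : 2 ≤ p) (hfs : 0 < deriv f s) (hgs : 0 ≤ g s) :
    deriv f s ^ (p - 1) * g s ^ n ≤ pFlux n p g j f s := by
  have hsq : deriv f s ^ (p - 2) ≤ energyDensitySq n g j f s ^ ((p - 2) / 2) := by
    rw [rpow_sub_two_eq_sq_rpow hfs.le]
    exact rpow_le_rpow (by positivity) sq_deriv_le_energyDensitySq (by linarith)
  calc deriv f s ^ (p - 1) * g s ^ n = deriv f s ^ (p - 2) * g s ^ n * deriv f s := by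
        rw [show p - 1 = p - 2 + 1 by ring, rpow_add_one hfs.ne']; ring
    _ ≤ pFlux n p g j f s := by unfold pFlux; gcongr

theorem deriv_rpow_le_pFlux (hp : 2 ≤ p) (hfs : 0 < deriv f s) (hgs : 0 < g s) {t : ℝ}
    (ht : 0 ≤ t) :
    deriv f s ^ ((p - 1) * t) ≤ (pFlux n p g j f s + 1) ^ t * g s ^ (-(n * t)) := by
  have hQ := deriv_rpow_sub_one_mul_pow_le_pFlux (n := n) (j := j) hp hfs hgs.le
  have hQ₀ : 0 < pFlux n p g j f s := pFlux_pos hfs hgs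
  have hpow : deriv f s ^ (p - 1) ≤ (pFlux n p g j f s + 1) * g s ^ (-(n : ℝ)) := by
    rw [rpow_neg hgs.le, rpow_natCast, ← div_eq_mul_inv, le_div_iff₀ (by positivity)]
    linarith
  rw [rpow_mul hfs.le, neg_mul_eq_neg_mul, rpow_mul hgs.le,
    ← mul_rpow (by linarith) (by positivity)]
  exact rpow_le_rpow (by positivity) hpow ht

theorem energyDensitySq_rpow_le (hp : 2 ≤ p) (hfs : 0 < deriv f s) (hgs : 0 < g s) {J : ℝ}
    (hj : 0 ≤ j (f s)) (hJ : j (f s) ≤ J) :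
    energyDensitySq n g j f s ^ ((p - 2) / 2)
      ≤ 2 ^ ((p - 2) / 2)
        * (deriv f s ^ (p - 2) + (n * J ^ 2) ^ ((p - 2) / 2) * g s ^ (2 - p)) := by
  have hr : 0 ≤ (p - 2) / 2 := by linarith
  have hJ0 : 0 ≤ J := hj.trans hJ
  calc energyDensitySq n g j f s ^ ((p - 2) / 2)
      ≤ (deriv f s ^ 2 + n * J ^ 2 / g s ^ 2) ^ ((p - 2) / 2) :=
        rpow_le_rpow (energyDensitySq_pos hfs).le (energyDensitySq_le hj hJ) hr
    _ ≤ 2 ^ ((p - 2) / 2)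
          * ((deriv f s ^ 2) ^ ((p - 2) / 2) + (n * J ^ 2 / g s ^ 2) ^ ((p - 2) / 2)) :=
        add_rpow_le_two_rpow_mul_add_rpow (by positivity) (by positivity) hr
    _ = _ := by
        rw [div_rpow (by positivity) (by positivity), ← rpow_sub_two_eq_sq_rpow hfs.le,
          ← rpow_sub_two_eq_sq_rpow hgs.le, show (2 : ℝ) - p = -(p - 2) by ring,
          rpow_neg hgs.le,
          div_eq_mul_inv (((n : ℝ) * J ^ 2) ^ ((p - 2) / 2))]

theorem pFluxSource_le (hp : 2 < p) (hfs : 0 < deriv f s) (hgs : 0 < g s) {J a : ℝ}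
    (hj : 0 ≤ j (f s)) (hJ : j (f s) ≤ J) (hj' : 0 ≤ deriv j (f s))
    (ha : deriv j (f s) ≤ a) :
    pFluxSource n p g j f s
      ≤ n * J * a * 2 ^ ((p - 2) / 2) * (pFlux n p g j f s + 1) ^ ((p - 2) / (p - 1))
        * (g s ^ ((n - 2 * (p - 1)) / (p - 1)) + (n * J ^ 2) ^ ((p - 2) / 2) * g s ^ (n - p)) := by
  set α := (p - 2) / (p - 1) with hα_def
  set u := pFlux n p g j f s + 1
  have hα : 0 ≤ α := div_nonneg (by linarith) (by linarith)
  have hQ : 0 < pFlux n p g j f s := pFlux_pos hfs hgs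
  -- `u ^ α ≥ 1` lets it bound the term of `E ^ ((p - 2) / 2)` that does not involve `f'`
  have hu : 1 ≤ u ^ α := one_le_rpow (by linarith) hα
  have hF : deriv f s ^ (p - 2) ≤ u ^ α * g s ^ (-(n * α)) := by
    have h := deriv_rpow_le_pFlux (n := n) (j := j) hp.le hfs hgs hα
    rwa [mul_div_cancel₀ _ (show p - 1 ≠ 0 by linarith)] at h
  have hE := energyDensitySq_rpow_le (n := n) hp.le hfs hgs hj hJ
  have hG : g s ^ n / g s ^ 2 = g s ^ ((n : ℝ) - 2) := by
    rw [rpow_sub hgs, rpow_natCast, rpow_two]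
  have hG₁ : g s ^ (-(n * α)) * g s ^ ((n : ℝ) - 2) = g s ^ ((n - 2 * (p - 1)) / (p - 1)) := by
    rw [← rpow_add hgs, hα_def]; congr 1; field_simp [show p - 1 ≠ 0 by linarith]; ring
  have hG₂ : g s ^ (2 - p) * g s ^ ((n : ℝ) - 2) = g s ^ ((n : ℝ) - p) := by
    rw [← rpow_add hgs]; ring_nf
  have hja : j (f s) * deriv j (f s) ≤ J * a := mul_le_mul hJ ha hj' (hj.trans hJ)
  have hEG : 0 ≤ energyDensitySq n g j f s ^ ((p - 2) / 2) * g s ^ ((n : ℝ) - 2) :=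
    mul_nonneg (rpow_nonneg (energyDensitySq_pos hfs).le _) (rpow_nonneg hgs.le _)
  have hJa : 0 ≤ n * (J * a) := by
    have := hj.trans hJ; have := hj'.trans ha; positivity
  calc pFluxSource n p g j f s
      = n * (j (f s) * deriv j (f s)) * (energyDensitySq n g j f s ^ ((p - 2) / 2)
          * g s ^ ((n : ℝ) - 2)) := by rw [pFluxSource, ← hG]; ring
    _ ≤ n * (J * a) * (2 ^ ((p - 2) / 2) * (deriv f s ^ (p - 2)
          + (n * J ^ 2) ^ ((p - 2) / 2) * g s ^ (2 - p)) * g s ^ ((n : ℝ) - 2)) :=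
        mul_le_mul (by gcongr) (mul_le_mul_of_nonneg_right hE (rpow_nonneg hgs.le _)) hEG hJa
    _ ≤ n * (J * a) * (2 ^ ((p - 2) / 2) * (u ^ α * g s ^ (-(n * α))
          + u ^ α * ((n * J ^ 2) ^ ((p - 2) / 2) * g s ^ (2 - p))) * g s ^ ((n : ℝ) - 2)) := by
        gcongr _ * (_ * (?_ + ?_) * _)
        exact le_mul_of_one_le_left (mul_nonneg (by positivity) (rpow_nonneg hgs.le _)) hu
    _ = _ := by rw [← hG₁, ← hG₂]; ring

end Flux

section Decay

variable {n : ℕ} {p a C δ J : ℝ} {g j f : ℝ → ℝ}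

theorem SolvesPHarmonic.exists_pFlux_rpow_le (hsol : SolvesPHarmonic n p g j f) (hp : 2 < p)
    (hC : 0 < C) (hgasym : Tendsto (fun s => g s / (C * s ^ δ)) atTop (𝓝 1))
    (hgpos : ∀ s > 0, 0 < g s) (hg : DifferentiableOn ℝ g (Ioi 0))
    (hj : DifferentiableOn ℝ j (Ioi 0)) (hf : DifferentiableOn ℝ f (Ioi 0))
    (hf' : DifferentiableOn ℝ (deriv f) (Ioi 0)) (hfpos : ∀ s > 0, 0 < f s)
    (hf'pos : ∀ s > 0, 0 < deriv f s) (hjf : ∀ s > 0, 0 ≤ j (f s) ∧ j (f s) ≤ J)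
    (hj' : ∀ t > 0, 0 ≤ deriv j t ∧ deriv j t ≤ a) {e : ℝ} (he : 0 < e)
    (he₁ : δ * ((n - 2 * (p - 1)) / (p - 1)) ≤ e - 1) (he₂ : δ * (n - p) ≤ e - 1) :
    ∃ D, ∀ᶠ s in atTop, (pFlux n p g j f s + 1) ^ (1 / (p - 1)) ≤ D * s ^ e := by
  have hg₀ : ∀ᶠ s in atTop, 0 < g s := (eventually_gt_atTop 0).mono hgpos
  obtain ⟨s₀, hs₀⟩ := eventually_atTop.1 ((eventually_ge_atTop 1).and
    ((eventually_rpow_le_of_tendsto_div hC hg₀ hgasym he₁).and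
      (eventually_rpow_le_of_tendsto_div hC hg₀ hgasym he₂)))
  have hpos : ∀ s ≥ s₀, 0 < s := fun s hs => one_pos.trans_le (hs₀ s hs).1
  have hQ : ∀ s > 0, 0 < pFlux n p g j f s := fun s hs => pFlux_pos (hf'pos s hs) (hgpos s hs)
  set r := (p - 2) / 2
  set α := (p - 2) / (p - 1) with hα
  set K := n * J * a * 2 ^ r * (2 * C ^ ((n - 2 * (p - 1)) / (p - 1))
    + (n * J ^ 2) ^ r * (2 * C ^ ((n : ℝ) - p)))
  have hJa : 0 ≤ J ∧ 0 ≤ a := ⟨(hjf 1 one_pos).1.trans (hjf 1 one_pos).2,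
    (hj' (f 1) (hfpos 1 one_pos)).1.trans (hj' (f 1) (hfpos 1 one_pos)).2⟩
  have hK : 0 ≤ K := by have := hJa.1; have := hJa.2; positivity
  have hderiv : ∀ s ≥ s₀, HasDerivAt (fun s => pFlux n p g j f s + 1)
      (pFluxSource n p g j f s) s :=
    fun s hs => by
      have hs' : s ∈ Ioi 0 := hpos s hs
      refine (hsol.hasDerivAt_pFlux hs' ?_ ?_ ?_ ?_ (hf'pos s hs') (hgpos s hs').ne').add_const 1
      exacts [hf.differentiableAt (Ioi_mem_nhds hs'), hf'.differentiableAt (Ioi_mem_nhds hs'),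
        hg.differentiableAt (Ioi_mem_nhds hs'),
        hj.differentiableAt (Ioi_mem_nhds (hfpos s hs'))]
  have hbound : ∀ s ≥ s₀,
      pFluxSource n p g j f s ≤ K * (pFlux n p g j f s + 1) ^ α * s ^ (e - 1) := fun s hs => by
    have hs' : 0 < s := hpos s hs
    obtain ⟨-, hg₁, hg₂⟩ := hs₀ s hs
    have hu : 0 ≤ (pFlux n p g j f s + 1) ^ α := rpow_nonneg (by linarith [hQ s hs']) _
    have := hJa.1; have := hJa.2
    calc _ ≤ n * J * a * 2 ^ r * (pFlux n p g j f s + 1) ^ α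
          * (g s ^ ((n - 2 * (p - 1)) / (p - 1)) + (n * J ^ 2) ^ r * g s ^ ((n : ℝ) - p)) :=
          pFluxSource_le hp (hf'pos s hs') (hgpos s hs') (hjf s hs').1 (hjf s hs').2
            (hj' _ (hfpos s hs')).1 (hj' _ (hfpos s hs')).2
      _ ≤ n * J * a * 2 ^ r * (pFlux n p g j f s + 1) ^ α
          * (2 * C ^ ((n - 2 * (p - 1)) / (p - 1)) * s ^ (e - 1)
            + (n * J ^ 2) ^ r * (2 * C ^ ((n : ℝ) - p) * s ^ (e - 1))) := by gcongr
      _ = K * (pFlux n p g j f s + 1) ^ α * s ^ (e - 1) := by ring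
  have hα₁ : α < 1 := by rw [hα, div_lt_one (by linarith)]; linarith
  obtain ⟨D, hD⟩ := exists_rpow_one_sub_le_mul_rpow_of_hasDerivAt_le (hs₀ s₀ le_rfl).1 hK hα₁ he
    (fun s hs => by linarith [hQ s (hpos s hs)]) hderiv hbound
  have h1α : 1 - α = 1 / (p - 1) := by rw [hα]; field_simp [show p - 1 ≠ 0 by linarith]; ring
  exact ⟨D, eventually_atTop.2 ⟨s₀, fun s hs => h1α ▸ hD s hs⟩⟩

theorem SolvesPHarmonic.tendsto_deriv_mul_rpow (hsol : SolvesPHarmonic n p g j f)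
    (hp : max 2 (n : ℝ) < p) (hp' : p < n + 1) (hδ : (p - n)⁻¹ < δ) (hC : 0 < C)
    (hgasym : Tendsto (fun s => g s / (C * s ^ δ)) atTop (𝓝 1))
    (hgpos : ∀ s > 0, 0 < g s) (hg : DifferentiableOn ℝ g (Ioi 0))
    (hj : DifferentiableOn ℝ j (Ioi 0)) (hf : DifferentiableOn ℝ f (Ioi 0))
    (hf' : DifferentiableOn ℝ (deriv f) (Ioi 0)) (hfpos : ∀ s > 0, 0 < f s)
    (hf'pos : ∀ s > 0, 0 < deriv f s) (hjf : ∀ s > 0, 0 ≤ j (f s) ∧ j (f s) ≤ J)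
    (hj' : ∀ t > 0, 0 ≤ deriv j t ∧ deriv j t ≤ a) :
    Tendsto (fun s => deriv f s * s ^ δ) atTop (𝓝 0) := by
  have hp₂ : 2 < p := (le_max_left _ _).trans_lt hp
  have hp₁ : p - 1 ≠ 0 := by linarith
  obtain ⟨e, he, he₁, he₂, he₃⟩ :=
    exists_flux_growth_exponent (by linarith) ((le_max_right _ _).trans_lt hp) hp' hδ
  obtain ⟨D, hD⟩ := hsol.exists_pFlux_rpow_le hp₂ hC hgasym hgpos hg hj hf hf' hfpos hf'pos
    hjf hj' he he₁ he₂
  have hg₀ : ∀ᶠ s in atTop, 0 < g s := (eventually_gt_atTop 0).mono hgpos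
  set M := D * (2 * C ^ (-(n / (p - 1)))) with hM
  have hlim : Tendsto (fun s => M * s ^ (e - δ * (n / (p - 1)) + δ)) atTop (𝓝 0) := by
    simpa using (tendsto_rpow_neg_atTop (neg_pos.2 he₃)).const_mul M
  refine squeeze_zero' ?_ ?_ hlim
  · filter_upwards [eventually_gt_atTop 0] with s hs
    exact mul_nonneg (hf'pos s hs).le (rpow_nonneg hs.le _)
  filter_upwards [hD, eventually_rpow_le_of_tendsto_div hC hg₀ hgasym le_rfl,
    eventually_gt_atTop 0] with s hDs hgs hs
  have hf's : deriv f s ≤ (pFlux n p g j f s + 1) ^ (1 / (p - 1)) * g s ^ (-(n / (p - 1))) := by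
    have h := deriv_rpow_le_pFlux (n := n) (j := j) hp₂.le (hf'pos s hs) (hgpos s hs)
      (t := 1 / (p - 1)) (div_nonneg zero_le_one (by linarith))
    rwa [mul_one_div_cancel hp₁, rpow_one, ← mul_div_assoc, mul_one] at h
  calc deriv f s * s ^ δ
      ≤ (D * s ^ e) * (2 * C ^ (-(n / (p - 1))) * s ^ (δ * -(n / (p - 1)))) * s ^ δ := by
        gcongr
        have hQ : 0 < pFlux n p g j f s := pFlux_pos (hf'pos s hs) (hgpos s hs)
        exact hf's.trans (mul_le_mul hDs hgs (rpow_nonneg (hgpos s hs).le _)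
          ((rpow_nonneg (by linarith) _).trans hDs))
    _ = _ := by rw [hM, mul_mul_mul_comm, mul_assoc, ← rpow_add hs, ← rpow_add hs]; ring_nf

end Decay

theorem A1_asymptotics_general (n : ℕ) (p a C₁ δ : ℝ) (g j f : ℝ → ℝ)
    (hp₁ : max 2 (n : ℝ) < p) (hp₂ : p < (n : ℝ) + 1)
    (hC₁ : 0 < C₁) (hδ : (p - (n : ℝ))⁻¹ < δ)
    (hg : ContDiffOn ℝ 1 g (Set.Ioi 0)) (hj : ContDiffOn ℝ 1 j (Set.Ioi 0))
    (hgpos : ∀ s > (0:ℝ), 0 < g s) (hjpos : ∀ t > (0:ℝ), 0 < j t)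
    (hj' : ∀ t > (0:ℝ), 0 < deriv j t ∧ deriv j t ≤ a)
    (hgasym : Tendsto (fun s => g s / (C₁ * s ^ δ)) atTop (𝓝 1))
    (hf : ContDiffOn ℝ 2 f (Set.Ici 0))
    (hfpos : ∀ s > (0:ℝ), 0 < f s) (hf'pos : ∀ s > (0:ℝ), 0 < deriv f s)
    (hsol : SolvesPHarmonic n p g j f)
    (c : ℝ) (hc : Tendsto f atTop (𝓝 c)) (hcpos : 0 < c)
    (hj'c : ContinuousAt (deriv j) c) :
    Tendsto (fun s : ℝ =>
        deriv j (f s) * ((3 - p) * (deriv f s) ^ 2 + (n : ℝ) * (j (f s)) ^ 2 / (g s) ^ 2)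
          * s ^ (2 * δ))
      atTop (𝓝 ((n : ℝ) * deriv j c * (j c) ^ 2 / C₁ ^ 2)) := by
  have hfI : ContDiffOn ℝ 2 f (Ioi 0) := hf.mono Ioi_subset_Ici_self
  have hfmono : MonotoneOn f (Ioi 0) := (strictMonoOn_of_deriv_pos (convex_Ioi 0)
    hfI.continuousOn fun s hs => hf'pos s (interior_subset hs)).monotoneOn
  have hjmono : MonotoneOn j (Ioi 0) := (strictMonoOn_of_deriv_pos (convex_Ioi 0)
    hj.continuousOn fun t ht => (hj' t (interior_subset ht)).1).monotoneOn
  have hjf : ∀ s > 0, 0 ≤ j (f s) ∧ j (f s) ≤ j c := fun s hs =>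
    ⟨(hjpos _ (hfpos s hs)).le, hjmono (hfpos s hs) hcpos (hfmono.le_of_tendsto_atTop hc hs)⟩
  have hdecay := hsol.tendsto_deriv_mul_rpow hp₁ hp₂ hδ hC₁ hgasym hgpos
    (hg.differentiableOn one_ne_zero) (hj.differentiableOn one_ne_zero)
    (hfI.differentiableOn two_ne_zero)
    ((hfI.deriv_of_isOpen isOpen_Ioi le_rfl).differentiableOn one_ne_zero) hfpos hf'pos hjf
    fun t ht => ⟨(hj' t ht).1.le, (hj' t ht).2⟩
  have hjg := tendsto_div_sq_mul_rpow_of_tendsto_div hC₁.ne'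
    ((((hj.continuousOn.continuousAt (Ioi_mem_nhds hcpos)).tendsto.comp hc).pow 2).const_mul
      (n : ℝ)) hgasym
  have hlim := (hj'c.tendsto.comp hc).mul (((hdecay.pow 2).const_mul (3 - p)).add hjg)
  rw [show (n : ℝ) * deriv j c * j c ^ 2 / C₁ ^ 2
    = deriv j c * ((3 - p) * 0 ^ 2 + n * j c ^ 2 / C₁ ^ 2) by ring]
  refine hlim.congr' ?_
  filter_upwards [eventually_gt_atTop 0] with s hs
  rw [show s ^ (2 * δ) = (s ^ δ) ^ 2 by rw [← rpow_natCast, ← rpow_mul hs.le]; ring_nf]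
  simp only [Function.comp_apply]
  ring

/-- Under hypotheses (H), if moreover `j'` is continuous at `ĉ = lim_{s→∞} f(s) > 0`, then
`A₁(s) = j'(f(s))·[(3-p)·f'(s)² + n·j(f(s))²/g(s)²]` satisfies
`A₁(s) ~ n·j'(ĉ)·j(ĉ)²/C₁² · s^{-2δ}` as `s → +∞`. -/
theorem A1_asymptotics (n : ℕ) (p a C₁ δ : ℝ) (g j f : ℝ → ℝ)
    (hn : 2 ≤ n) (hp₁ : max 2 (n : ℝ) < p) (hp₂ : p < (n : ℝ) + 1)
    (ha : 0 < a) (hC₁ : 0 < C₁) (hδ : (p - (n : ℝ))⁻¹ < δ)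
    (hg : ContDiffOn ℝ 1 g (Set.Ioi 0)) (hj : ContDiffOn ℝ 1 j (Set.Ioi 0))
    (hg0 : g 0 = 0) (hj0 : j 0 = 0)
    (hg'0 : HasDerivWithinAt g 1 (Set.Ici 0) 0) (hj'0 : HasDerivWithinAt j 1 (Set.Ici 0) 0)
    (hgpos : ∀ s > (0:ℝ), 0 < g s) (hjpos : ∀ t > (0:ℝ), 0 < j t)
    (hj' : ∀ t > (0:ℝ), 0 < deriv j t ∧ deriv j t ≤ a)
    (hg' : ∀ᶠ s in atTop, 0 < deriv g s)
    (hgasym : Tendsto (fun s => g s / (C₁ * s ^ δ)) atTop (𝓝 1))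
    (hf : ContDiffOn ℝ 2 f (Set.Ici 0))
    (hfbdd : ∃ B, ∀ s ≥ (0:ℝ), |f s| ≤ B)
    (hf0 : f 0 = 0)
    (hfpos : ∀ s > (0:ℝ), 0 < f s) (hf'pos : ∀ s > (0:ℝ), 0 < deriv f s)
    (hsol : SolvesPHarmonic n p g j f)
    (c : ℝ) (hc : Tendsto f atTop (𝓝 c)) (hcpos : 0 < c)
    (hj'c : ContinuousAt (deriv j) c) :
    Tendsto (fun s : ℝ =>
        deriv j (f s) * ((3 - p) * (deriv f s) ^ 2 + (n : ℝ) * (j (f s)) ^ 2 / (g s) ^ 2)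
          * s ^ (2 * δ))
      atTop (𝓝 ((n : ℝ) * deriv j c * (j c) ^ 2 / C₁ ^ 2)) :=
  A1_asymptotics_general n p a C₁ δ g j f hp₁ hp₂ hC₁ hδ hg hj hgpos hjpos hj' hgasym hf hfpos
    hf'pos hsol c hc hcpos hj'c
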